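/- Let P = {P_k} be a complete family of orthogonal projectors and for a density matrix ρ define the geometric block coherence C_geo(ρ,P) = 1 − max_{σ ∈ I_B} F(ρ,σ)², where F(ρ,σ) = Tr√(√ρ σ √ρ) is the fidelity, and C_Tr(ρ,P) = inf{ ‖ρ − λσ‖_Tr : λ > 0, σ ∈ I_B }. Then C_geo(ρ,P) ≥ (1/4)[C_Tr(ρ,P)]². (The proof uses the Fuchs–van de Graaf inequality 1 − F(ρ,σ)² ≥ (1/4)‖ρ − σ‖_Tr² for density matrices ρ, σ.) -/

import Mathlib

open Matrix
open scoped ComplexOrder Classical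

namespace BlockCoherence

variable {n : Type*} [Fintype n] [DecidableEq n]

/-- Real part of the trace of a complex matrix. -/
noncomputable def retr (A : Matrix n n ℂ) : ℝ := (Matrix.trace A).re

/-- A density matrix: positive semidefinite with trace 1. -/
def IsDensityMatrix (ρ : Matrix n n ℂ) : Prop := ρ.PosSemidef ∧ Matrix.trace ρ = 1

/-- A complete family of orthogonal projectors. -/
def IsProjFamily {K : Type*} [Fintype K] (P : K → Matrix n n ℂ) : Prop :=
  (∀ k, (P k).IsHermitian) ∧ (∀ k, P k * P k = P k) ∧
    (∀ j k, j ≠ k → P j * P k = 0) ∧ (∑ k, P k = 1)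

/-- Block dephasing map Δ(ρ) = Σ_k P_k ρ P_k. -/
noncomputable def deph {K : Type*} [Fintype K] (P : K → Matrix n n ℂ)
    (ρ : Matrix n n ℂ) : Matrix n n ℂ := ∑ k, P k * ρ * P k

/-- Block incoherent (free) states. -/
def IsBlockIncoherent {K : Type*} [Fintype K] (P : K → Matrix n n ℂ)
    (σ : Matrix n n ℂ) : Prop := IsDensityMatrix σ ∧ σ = deph P σ

/-- A block-incoherent operation presented by its Kraus operators. -/
def IsBIOp {K : Type*} [Fintype K] {N : Type*} [Fintype N]
    (P : K → Matrix n n ℂ) (Kr : N → Matrix n n ℂ) : Prop :=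
  (∑ m, (Kr m)ᴴ * Kr m = 1) ∧
    ∀ (m : N) (i j : K), i ≠ j → ∀ σ, IsBlockIncoherent P σ →
      P i * (Kr m * σ * (Kr m)ᴴ) * P j = 0

/-- The channel determined by Kraus operators. -/
noncomputable def krausApply {N : Type*} [Fintype N]
    (Kr : N → Matrix n n ℂ) (ρ : Matrix n n ℂ) : Matrix n n ℂ :=
  ∑ m, Kr m * ρ * (Kr m)ᴴ

/-- A block coherence measure: conditions (B1)-(B4). -/
structure IsBlockCoherenceMeasure {K : Type*} [Fintype K] (P : K → Matrix n n ℂ)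
    (C : Matrix n n ℂ → ℝ) : Prop where
  nonneg : ∀ ρ, IsDensityMatrix ρ → 0 ≤ C ρ
  eq_zero_iff : ∀ ρ, IsDensityMatrix ρ → (C ρ = 0 ↔ IsBlockIncoherent P ρ)
  monotone : ∀ ρ, IsDensityMatrix ρ → ∀ {N : Type} [Fintype N] (Kr : N → Matrix n n ℂ),
    IsBIOp P Kr → C (krausApply Kr ρ) ≤ C ρ
  strong_monotone : ∀ ρ, IsDensityMatrix ρ → ∀ {N : Type} [Fintype N] (Kr : N → Matrix n n ℂ),
    IsBIOp P Kr →
      ∑ m, (if retr (Kr m * ρ * (Kr m)ᴴ) = 0 then (0 : ℝ) else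
        retr (Kr m * ρ * (Kr m)ᴴ) *
          C ((retr (Kr m * ρ * (Kr m)ᴴ))⁻¹ • (Kr m * ρ * (Kr m)ᴴ))) ≤ C ρ
  convex : ∀ {N : Type} [Fintype N] (p : N → ℝ) (ρs : N → Matrix n n ℂ),
    (∀ m, 0 ≤ p m) → ∑ m, p m = 1 → (∀ m, IsDensityMatrix (ρs m)) →
      C (∑ m, p m • ρs m) ≤ ∑ m, p m * C (ρs m)

/-- Real power of a matrix via the spectral functional calculus (0 on non-Hermitian input). -/
noncomputable def mpow (A : Matrix n n ℂ) (t : ℝ) : Matrix n n ℂ :=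
  if hA : A.IsHermitian then
    (hA.eigenvectorUnitary : Matrix n n ℂ) *
      Matrix.diagonal (fun i => ((hA.eigenvalues i ^ t : ℝ) : ℂ)) *
      (star (hA.eigenvectorUnitary : Matrix n n ℂ))
  else 0

/-- Positive semidefinite square root (0 on non-PSD input). -/
noncomputable def msqrt (A : Matrix n n ℂ) : Matrix n n ℂ :=
  if hA : A.PosSemidef then
    (hA.1.eigenvectorUnitary : Matrix n n ℂ) *
      Matrix.diagonal ((↑) ∘ (Real.sqrt ·) ∘ hA.1.eigenvalues) *
      (star hA.1.eigenvectorUnitary : Matrix n n ℂ)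
  else 0

/-- Base-2 matrix logarithm via spectral calculus, with the convention log 0 = 0. -/
noncomputable def mlog2 (A : Matrix n n ℂ) : Matrix n n ℂ :=
  if hA : A.IsHermitian then
    (hA.eigenvectorUnitary : Matrix n n ℂ) *
      Matrix.diagonal (fun i => ((Real.logb 2 (hA.eigenvalues i) : ℝ) : ℂ)) *
      (star (hA.eigenvectorUnitary : Matrix n n ℂ))
  else 0

/-- Trace norm ‖M‖_Tr = Tr √(MᴴM). -/
noncomputable def trNorm (M : Matrix n n ℂ) : ℝ :=
  retr (msqrt (Mᴴ * M))

/-- The α-z Rényi block coherence measure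
`C_{α,z}(ρ,P) = 1 - (max_{σ∈I_B} Tr[(σ^{(1-α)/(2z)} ρ^{α/z} σ^{(1-α)/(2z)})^z])^{1/α}`. -/
noncomputable def Caz {K : Type*} [Fintype K] (α z : ℝ) (P : K → Matrix n n ℂ)
    (ρ : Matrix n n ℂ) : ℝ :=
  1 - (sSup {x : ℝ | ∃ σ, IsBlockIncoherent P σ ∧
    x = retr (mpow (mpow σ ((1 - α) / (2 * z)) * mpow ρ (α / z) *
      mpow σ ((1 - α) / (2 * z))) z)}) ^ (1 / α)


/-- Trace-norm block coherence `C_Tr(ρ,P) = inf { ‖ρ - λσ‖_Tr : λ > 0, σ ∈ I_B }`. -/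
noncomputable def CTr {K : Type*} [Fintype K] (P : K → Matrix n n ℂ)
    (ρ : Matrix n n ℂ) : ℝ :=
  sInf {x : ℝ | ∃ (lam : ℝ) (σ : Matrix n n ℂ), 0 < lam ∧
    IsBlockIncoherent P σ ∧ x = trNorm (ρ - lam • σ)}

/-- Fidelity `F(ρ,σ) = Tr √(√ρ σ √ρ)`. -/
noncomputable def fidelity (ρ σ : Matrix n n ℂ) : ℝ :=
  retr (msqrt (msqrt ρ * σ * msqrt ρ))

/-- Geometric block coherence `C_geo(ρ,P) = 1 - max_{σ∈I_B} F(ρ,σ)²`. -/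
noncomputable def Cgeo {K : Type*} [Fintype K] (P : K → Matrix n n ℂ)
    (ρ : Matrix n n ℂ) : ℝ :=
  1 - sSup {x : ℝ | ∃ σ, IsBlockIncoherent P σ ∧ x = (fidelity ρ σ) ^ 2}

/-!
Every free state `σ` is admissible in `CTr` (with `λ = 1`), so it suffices to prove the
Fuchs–van de Graaf bound `‖ρ - σ‖₁² ≤ 4 (1 - F(ρ,σ)²)`. Write `ρ = C Cᴴ` and `σ = D Dᴴ` with
`C = √ρ` and `D = √σ U`, where the unitary `U` of the polar decomposition of `√σ √ρ` makes
`Re Tr (Dᴴ C) = F`. Then `2 (ρ - σ) = (C - D)(C + D)ᴴ + (C + D)(C - D)ᴴ`; pairing with the unitary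
of the polar decomposition of `ρ - σ` and applying Cauchy–Schwarz for the Hilbert–Schmidt inner
product gives `‖ρ - σ‖₁ ≤ ‖C - D‖₂ ‖C + D‖₂ = √((2 - 2F)(2 + 2F))`.
-/

theorem exists_orthonormalBasis_norm_smul_eq {𝕜 E ι : Type*} [RCLike 𝕜]
    [NormedAddCommGroup E] [InnerProductSpace 𝕜 E] [FiniteDimensional 𝕜 E] [Fintype ι]
    (hcard : Module.finrank 𝕜 E = Fintype.card ι) {f : ι → E}
    (hf : Pairwise fun i j => inner 𝕜 (f i) (f j) = 0) :
    ∃ b : OrthonormalBasis ι 𝕜 E, ∀ i, (‖f i‖ : 𝕜) • b i = f i := by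
  set s : Set ι := {i | f i ≠ 0}
  have hv : Orthonormal 𝕜 (s.domRestrict fun i => (‖f i‖⁻¹ : 𝕜) • f i) := by
    refine ⟨fun i => norm_smul_inv_norm i.2, fun i j hij => ?_⟩
    simp [Set.domRestrict_apply, inner_smul_left, inner_smul_right,
      hf (Subtype.coe_ne_coe.mpr hij)]
  obtain ⟨b, hb⟩ := hv.exists_orthonormalBasis_extension_of_card_eq hcard
  refine ⟨b, fun i => ?_⟩
  by_cases hi : f i = 0
  · simp [hi]
  · rw [hb i hi, smul_smul, mul_inv_cancel₀ (by simpa using hi), one_smul]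

section Unitary

variable {𝕜 : Type*} [RCLike 𝕜]

lemma inner_toLp_transpose {m p : Type*} [Fintype m] (X : Matrix m p 𝕜) (i j : p) :
    inner 𝕜 (WithLp.toLp 2 (Xᵀ i)) (WithLp.toLp 2 (Xᵀ j)) = (Xᴴ * X) i j := by
  simp [EuclideanSpace.inner_toLp_toLp, dotProduct, Matrix.mul_apply, mul_comm]

theorem exists_unitary_mul_diagonal_sqrt_eq {X : Matrix n n 𝕜} {d : n → ℝ}
    (hX : Xᴴ * X = diagonal fun i => (d i : 𝕜)) :
    ∃ B ∈ unitaryGroup n 𝕜, B * diagonal (fun i => (√(d i) : 𝕜)) = X := by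
  set f : n → EuclideanSpace 𝕜 n := fun i => WithLp.toLp 2 (Xᵀ i)
  have hf : Pairwise fun i j => inner 𝕜 (f i) (f j) = 0 := fun i j hij => by
    simp [f, inner_toLp_transpose, hX, hij]
  have hnorm : ∀ i, ‖f i‖ = √(d i) := fun i => by
    rw [← Real.sqrt_sq (norm_nonneg _), @norm_sq_eq_re_inner 𝕜, inner_toLp_transpose, hX]
    simp
  obtain ⟨b, hb⟩ := exists_orthonormalBasis_norm_smul_eq finrank_euclideanSpace hf
  refine ⟨_, (EuclideanSpace.basisFun n 𝕜).toMatrix_orthonormalBasis_mem_unitary b, ?_⟩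
  ext k i
  have := congrArg (fun v : EuclideanSpace 𝕜 n => v k) (hb i)
  simp only [hnorm, f, PiLp.smul_apply, smul_eq_mul] at this
  simpa [mul_diagonal, Module.Basis.toMatrix_apply, mul_comm] using this

end Unitary

section SquareRoot

open scoped MatrixOrder

lemma msqrt_eq_cfcSqrt {A : Matrix n n ℂ} (hA : A.PosSemidef) : msqrt A = CFC.sqrt A := by
  rw [msqrt, dif_pos hA, CFC.sqrt_eq_real_sqrt A hA.nonneg, cfcₙ_eq_cfc, hA.1.cfc_eq,
    IsHermitian.cfc, Unitary.conjStarAlgAut_apply]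
  rfl

lemma msqrt_posSemidef {A : Matrix n n ℂ} (hA : A.PosSemidef) : (msqrt A).PosSemidef := by
  rw [msqrt_eq_cfcSqrt hA]
  exact nonneg_iff_posSemidef.mp (CFC.sqrt_nonneg A)

lemma msqrt_mul_self {A : Matrix n n ℂ} (hA : A.PosSemidef) : msqrt A * msqrt A = A := by
  rw [msqrt_eq_cfcSqrt hA]
  exact CFC.sqrt_mul_sqrt_self A hA.nonneg

end SquareRoot

theorem exists_unitary_mul_msqrt_eq (M : Matrix n n ℂ) :
    ∃ U ∈ unitaryGroup n ℂ, U * msqrt (Mᴴ * M) = M := by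
  have hA := posSemidef_conjTranspose_mul_self M
  set V : Matrix n n ℂ := (hA.1.eigenvectorUnitary : Matrix n n ℂ)
  have hV : V ∈ unitaryGroup n ℂ := hA.1.eigenvectorUnitary.2
  set D : Matrix n n ℂ := diagonal fun i => (√(hA.1.eigenvalues i) : ℂ)
  have hsqrt : msqrt (Mᴴ * M) = V * D * star V := by
    rw [msqrt, dif_pos hA]; rfl
  have hdiag : (M * V)ᴴ * (M * V) = diagonal fun i => (hA.1.eigenvalues i : ℂ) := by
    have := hA.1.conjStarAlgAut_star_eigenvectorUnitary
    rw [Unitary.conjStarAlgAut_star_apply] at this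
    simpa [V, Matrix.mul_assoc, Matrix.star_eq_conjTranspose, Function.comp_def] using this
  obtain ⟨B, hB, hBD : B * D = M * V⟩ := exists_unitary_mul_diagonal_sqrt_eq hdiag
  refine ⟨B * star V, mul_mem hB (Unitary.star_mem hV), ?_⟩
  calc B * star V * msqrt (Mᴴ * M) = B * D * star V := by
        simp only [hsqrt, ← Matrix.mul_assoc]
        rw [Matrix.mul_assoc B, Unitary.star_mul_self_of_mem hV, Matrix.mul_one]
    _ = M := by
        rw [hBD, Matrix.mul_assoc, Unitary.mul_star_self_of_mem hV, Matrix.mul_one]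

lemma retr_nonneg {m : Type*} [Fintype m] {A : Matrix m m ℂ} (hA : A.PosSemidef) : 0 ≤ retr A :=
  (Complex.nonneg_iff.mp hA.trace_nonneg).1

lemma trNorm_nonneg (M : Matrix n n ℂ) : 0 ≤ trNorm M :=
  retr_nonneg (msqrt_posSemidef (posSemidef_conjTranspose_mul_self M))

lemma exists_unitary_trNorm_eq_retr (M : Matrix n n ℂ) :
    ∃ U ∈ unitaryGroup n ℂ, trNorm M = retr (star U * M) := by
  obtain ⟨U, hU, hUM⟩ := exists_unitary_mul_msqrt_eq M
  refine ⟨U, hU, ?_⟩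
  conv_rhs => rw [← hUM, ← Matrix.mul_assoc, Unitary.star_mul_self_of_mem hU, Matrix.one_mul]
  rfl

lemma norm_trace_conjTranspose_mul_le (X Y : Matrix n n ℂ) :
    ‖(Xᴴ * Y).trace‖ ≤ √(retr (Xᴴ * X)) * √(retr (Yᴴ * Y)) := by
  let _ := (1 : Matrix n n ℂ).toMatrixSeminormedAddCommGroup PosSemidef.one
  let _ := (1 : Matrix n n ℂ).toMatrixInnerProductSpace PosSemidef.one
  have := norm_inner_le_norm (𝕜 := ℂ) Yᴴ Xᴴ
  -- the inner product induced by `1` is `⟪A, B⟫ = Tr (B * 1 * Aᴴ)`, with norm `√(Re ⟪A, A⟫)`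
  change ‖(Xᴴ * 1 * Yᴴᴴ).trace‖ ≤ √(retr (Yᴴ * 1 * Yᴴᴴ)) * √(retr (Xᴴ * 1 * Xᴴᴴ)) at this
  simpa only [Matrix.mul_one, conjTranspose_conjTranspose, mul_comm (√(retr (Yᴴ * Y)))] using this

section Expansion

variable {m : Type*} [Fintype m]

lemma retr_conjTranspose_mul_comm (C D : Matrix m m ℂ) : retr (Cᴴ * D) = retr (Dᴴ * C) := by
  calc retr (Cᴴ * D) = retr (Dᴴ * C)ᴴ := by rw [conjTranspose_mul, conjTranspose_conjTranspose]
    _ = retr (Dᴴ * C) := by rw [retr, trace_conjTranspose, Complex.star_def, Complex.conj_re, retr]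

lemma retr_conjTranspose_mul_self_sub (C D : Matrix m m ℂ) :
    retr ((C - D)ᴴ * (C - D)) = retr (Cᴴ * C) + retr (Dᴴ * D) - 2 * retr (Dᴴ * C) := by
  have := retr_conjTranspose_mul_comm C D
  simp only [retr, conjTranspose_sub, sub_mul, mul_sub, trace_sub, Complex.sub_re] at this ⊢
  linarith

lemma retr_conjTranspose_mul_self_add (C D : Matrix m m ℂ) :
    retr ((C + D)ᴴ * (C + D)) = retr (Cᴴ * C) + retr (Dᴴ * D) + 2 * retr (Dᴴ * C) := by
  have := retr_conjTranspose_mul_comm C D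
  simp only [retr, conjTranspose_add, add_mul, mul_add, trace_add, Complex.add_re] at this ⊢
  linarith

end Expansion

lemma retr_star_mul_mul_conjTranspose_le {U : Matrix n n ℂ} (hU : U ∈ unitaryGroup n ℂ)
    (X Y : Matrix n n ℂ) :
    retr (star U * (X * Yᴴ)) ≤ √(retr (Xᴴ * X)) * √(retr (Yᴴ * Y)) := by
  have hUY : (U * Y)ᴴ * (U * Y) = Yᴴ * Y := by
    rw [conjTranspose_mul, Matrix.mul_assoc, ← Matrix.mul_assoc Uᴴ, ← star_eq_conjTranspose U,
      Unitary.star_mul_self_of_mem hU, Matrix.one_mul]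
  calc retr (star U * (X * Yᴴ)) = ((U * Y)ᴴ * X).trace.re := by
        rw [retr, ← Matrix.mul_assoc, trace_mul_comm, conjTranspose_mul, star_eq_conjTranspose,
          Matrix.mul_assoc]
    _ ≤ ‖((U * Y)ᴴ * X).trace‖ := Complex.re_le_norm _
    _ ≤ √(retr ((U * Y)ᴴ * (U * Y))) * √(retr (Xᴴ * X)) :=
        norm_trace_conjTranspose_mul_le _ _
    _ = √(retr (Xᴴ * X)) * √(retr (Yᴴ * Y)) := by rw [hUY, mul_comm]

theorem trNorm_mul_conjTranspose_sub_le (C D : Matrix n n ℂ) :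
    trNorm (C * Cᴴ - D * Dᴴ) ≤
      √(retr ((C - D)ᴴ * (C - D))) * √(retr ((C + D)ᴴ * (C + D))) := by
  obtain ⟨U, hU, hUH⟩ := exists_unitary_trNorm_eq_retr (C * Cᴴ - D * Dᴴ)
  have hsplit : (C - D) * (C + D)ᴴ + (C + D) * (C - D)ᴴ =
      (C * Cᴴ - D * Dᴴ) + (C * Cᴴ - D * Dᴴ) := by
    rw [conjTranspose_add, conjTranspose_sub]
    noncomm_ring
  have hsum : retr (star U * ((C - D) * (C + D)ᴴ)) + retr (star U * ((C + D) * (C - D)ᴴ)) =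
      2 * retr (star U * (C * Cᴴ - D * Dᴴ)) := by
    simp only [retr, ← Complex.add_re, ← trace_add, ← Matrix.mul_add, hsplit]
    rw [Matrix.mul_add, trace_add, Complex.add_re, two_mul]
  have h1 := retr_star_mul_mul_conjTranspose_le hU (C - D) (C + D)
  have h2 := retr_star_mul_mul_conjTranspose_le hU (C + D) (C - D)
  rw [hUH]
  linarith [mul_comm √(retr ((C - D)ᴴ * (C - D))) √(retr ((C + D)ᴴ * (C + D)))]

lemma fidelity_eq_trNorm {ρ σ : Matrix n n ℂ} (hρ : ρ.PosSemidef) (hσ : σ.PosSemidef) :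
    fidelity ρ σ = trNorm (msqrt σ * msqrt ρ) := by
  rw [fidelity, trNorm, conjTranspose_mul, (msqrt_posSemidef hρ).1, (msqrt_posSemidef hσ).1,
    Matrix.mul_assoc (msqrt ρ) (msqrt σ), ← Matrix.mul_assoc (msqrt σ), msqrt_mul_self hσ,
    Matrix.mul_assoc]

theorem trNorm_sub_sq_le_four_mul_one_sub_fidelity_sq {ρ σ : Matrix n n ℂ}
    (hρ : IsDensityMatrix ρ) (hσ : IsDensityMatrix σ) :
    trNorm (ρ - σ) ^ 2 ≤ 4 * (1 - fidelity ρ σ ^ 2) := by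
  obtain ⟨hρ, hρ1⟩ := hρ
  obtain ⟨hσ, hσ1⟩ := hσ
  set C := msqrt ρ
  have hC : Cᴴ = C := (msqrt_posSemidef hρ).1
  obtain ⟨U, hU, hF⟩ := exists_unitary_trNorm_eq_retr (msqrt σ * C)
  set D := msqrt σ * U
  have hCC : C * Cᴴ = ρ := by rw [hC]; exact msqrt_mul_self hρ
  have hDD : D * Dᴴ = σ := by
    rw [conjTranspose_mul, (msqrt_posSemidef hσ).1, Matrix.mul_assoc, ← Matrix.mul_assoc U,
      ← star_eq_conjTranspose, Unitary.mul_star_self_of_mem hU, Matrix.one_mul,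
      msqrt_mul_self hσ]
  have hDC : retr (Dᴴ * C) = fidelity ρ σ := by
    rw [fidelity_eq_trNorm hρ hσ, hF, conjTranspose_mul, (msqrt_posSemidef hσ).1,
      star_eq_conjTranspose, Matrix.mul_assoc]
  have hcyc : ∀ X : Matrix n n ℂ, retr (Xᴴ * X) = retr (X * Xᴴ) := fun X => by
    rw [retr, trace_mul_comm, retr]
  have hp := retr_conjTranspose_mul_self_sub C D
  have hq := retr_conjTranspose_mul_self_add C D
  have hone : ∀ {τ : Matrix n n ℂ}, τ.trace = 1 → retr τ = 1 := fun h => by simp [retr, h]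
  rw [hcyc C, hcyc D, hCC, hDD, hDC, hone hρ1, hone hσ1] at hp hq
  calc trNorm (ρ - σ) ^ 2 = trNorm (C * Cᴴ - D * Dᴴ) ^ 2 := by rw [hCC, hDD]
    _ ≤ (√(retr ((C - D)ᴴ * (C - D))) * √(retr ((C + D)ᴴ * (C + D)))) ^ 2 :=
        pow_le_pow_left₀ (trNorm_nonneg _) (trNorm_mul_conjTranspose_sub_le C D) 2
    _ = retr ((C - D)ᴴ * (C - D)) * retr ((C + D)ᴴ * (C + D)) := by
        rw [mul_pow, Real.sq_sqrt (retr_nonneg (posSemidef_conjTranspose_mul_self _)),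
          Real.sq_sqrt (retr_nonneg (posSemidef_conjTranspose_mul_self _))]
    _ = 4 * (1 - fidelity ρ σ ^ 2) := by rw [hp, hq]; ring

section TraceDistanceCoherence

variable {K : Type*} [Fintype K] (P : K → Matrix n n ℂ) (ρ : Matrix n n ℂ)

lemma CTr_nonneg : 0 ≤ CTr P ρ :=
  Real.sInf_nonneg <| by rintro _ ⟨_, _, _, _, rfl⟩; exact trNorm_nonneg _

lemma CTr_le_trNorm_sub {σ : Matrix n n ℂ} (hσ : IsBlockIncoherent P σ) :
    CTr P ρ ≤ trNorm (ρ - σ) :=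
  csInf_le ⟨0, by rintro _ ⟨_, _, _, _, rfl⟩; exact trNorm_nonneg _⟩
    ⟨1, σ, one_pos, hσ, by rw [one_smul]⟩

end TraceDistanceCoherence

theorem Cgeo_ge_CTr_sq_general
    {K : Type*} [Fintype K]
    (P : K → Matrix n n ℂ)
    (ρ : Matrix n n ℂ) (hρ : IsDensityMatrix ρ) :
    (1 / 4) * (CTr P ρ) ^ 2 ≤ Cgeo P ρ := by
  by_cases hfree : ∃ σ, IsBlockIncoherent P σ
  · obtain ⟨σ₀, hσ₀⟩ := hfree
    have hsup : sSup {x : ℝ | ∃ σ, IsBlockIncoherent P σ ∧ x = fidelity ρ σ ^ 2} ≤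
        1 - (1 / 4) * CTr P ρ ^ 2 := by
      refine csSup_le ⟨_, σ₀, hσ₀, rfl⟩ ?_
      rintro _ ⟨σ, hσ, rfl⟩
      have := pow_le_pow_left₀ (CTr_nonneg P ρ) (CTr_le_trNorm_sub P ρ hσ) 2
      linarith [trNorm_sub_sq_le_four_mul_one_sub_fidelity_sq hρ hσ.1]
    rw [Cgeo]
    linarith
  · -- both `sSup` and `sInf` are then taken over `∅`, where they are `0`
    simp [Cgeo, CTr, not_exists.mp hfree]

/-- `C_geo(ρ,P) ≥ (1/4)[C_Tr(ρ,P)]²`. -/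
theorem Cgeo_ge_CTr_sq
    {K : Type*} [Fintype K]
    (P : K → Matrix n n ℂ) (hP : IsProjFamily P)
    (ρ : Matrix n n ℂ) (hρ : IsDensityMatrix ρ) :
    (1 / 4) * (CTr P ρ) ^ 2 ≤ Cgeo P ρ :=
  Cgeo_ge_CTr_sq_general P ρ hρ

end BlockCoherence
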